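/- arXiv:1609.00587 — 5 statements merged into one kernel-verified Lean document; each statement's English description precedes it below -/
import Mathlib

section
/- Let b be an n×k real matrix and σ an l×k real matrix such that c = b bᵀ and σσᵀ are positive definite, and let Q₁ = I_k − bᵀ c⁻¹ b. Then the matrix σ Q₁ σᵀ is positive definite if and only if the matrix c − b σᵀ (σ σᵀ)⁻¹ σ bᵀ is positive definite. -/
open Matrix

open scoped Matrix

lemma schur_posDef_fromBlocks {m n : Type*} [Fintype m] [DecidableEq m] [Fintype n]
    [DecidableEq n] {A : Matrix m m ℝ} (B : Matrix m n ℝ) {D : Matrix n n ℝ}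
    (hA : A.PosDef) (hD : D.PosDef) :
    (D - Bᴴ * A⁻¹ * B).PosDef ↔ (A - B * D⁻¹ * Bᴴ).PosDef := by
  haveI := hA.isUnit.invertible
  haveI := hD.isUnit.invertible
  have hM₁ : ∀ S : Matrix n n ℝ, S = D - Bᴴ * A⁻¹ * B → S.PosDef →
      (fromBlocks A B Bᴴ D).PosDef := by
    rintro S rfl hS
    refine posDef_iff_dotProduct_mulVec.mpr ⟨(Matrix.IsHermitian.fromBlocks₁₁ B D hA.1).mpr hS.1, fun z hz => ?_⟩
    have hz' : z = Sum.elim (z ∘ Sum.inl) (z ∘ Sum.inr) := by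
      funext i; cases i <;> rfl
    rw [hz', dotProduct_mulVec,
      Matrix.schur_complement_eq₁₁ B D (z ∘ Sum.inl) (z ∘ Sum.inr) hA.1]
    by_cases hy : (z ∘ Sum.inr) = 0
    · have hx : (z ∘ Sum.inl) ≠ 0 := by
        intro hx
        apply hz
        rw [hz']
        simp [hx, hy]
      have h1 : 0 < star (z ∘ Sum.inl + (A⁻¹ * B) *ᵥ (z ∘ Sum.inr)) ᵥ* A ⬝ᵥ
          (z ∘ Sum.inl + (A⁻¹ * B) *ᵥ (z ∘ Sum.inr)) := by
        rw [← dotProduct_mulVec]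
        simpa [hy] using hA.dotProduct_mulVec_pos hx
      have h2 : star (z ∘ Sum.inr) ᵥ* (D - Bᴴ * A⁻¹ * B) ⬝ᵥ (z ∘ Sum.inr) = 0 := by
        simp [hy]
      linarith
    · have h1 : 0 ≤ star (z ∘ Sum.inl + (A⁻¹ * B) *ᵥ (z ∘ Sum.inr)) ᵥ* A ⬝ᵥ
          (z ∘ Sum.inl + (A⁻¹ * B) *ᵥ (z ∘ Sum.inr)) := by
        rw [← dotProduct_mulVec]
        exact hA.posSemidef.dotProduct_mulVec_nonneg _
      have h2 : 0 < star (z ∘ Sum.inr) ᵥ* (D - Bᴴ * A⁻¹ * B) ⬝ᵥ (z ∘ Sum.inr) := by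
        rw [← dotProduct_mulVec]
        exact hS.dotProduct_mulVec_pos hy
      linarith
  have hM₂ : ∀ S : Matrix m m ℝ, S = A - B * D⁻¹ * Bᴴ → S.PosDef →
      (fromBlocks A B Bᴴ D).PosDef := by
    rintro S rfl hS
    refine posDef_iff_dotProduct_mulVec.mpr ⟨(Matrix.IsHermitian.fromBlocks₂₂ A B hD.1).mpr hS.1, fun z hz => ?_⟩
    have hz' : z = Sum.elim (z ∘ Sum.inl) (z ∘ Sum.inr) := by
      funext i; cases i <;> rfl
    rw [hz', dotProduct_mulVec,
      Matrix.schur_complement_eq₂₂ A B (z ∘ Sum.inl) (z ∘ Sum.inr) hD.1]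
    by_cases hx : (z ∘ Sum.inl) = 0
    · have hy : (z ∘ Sum.inr) ≠ 0 := by
        intro hy
        apply hz
        rw [hz']
        simp [hx, hy]
      have h1 : 0 < star ((D⁻¹ * Bᴴ) *ᵥ (z ∘ Sum.inl) + (z ∘ Sum.inr)) ᵥ* D ⬝ᵥ
          ((D⁻¹ * Bᴴ) *ᵥ (z ∘ Sum.inl) + (z ∘ Sum.inr)) := by
        rw [← dotProduct_mulVec]
        simpa [hx] using hD.dotProduct_mulVec_pos hy
      have h2 : star (z ∘ Sum.inl) ᵥ* (A - B * D⁻¹ * Bᴴ) ⬝ᵥ (z ∘ Sum.inl) = 0 := by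
        simp [hx]
      linarith
    · have h1 : 0 ≤ star ((D⁻¹ * Bᴴ) *ᵥ (z ∘ Sum.inl) + (z ∘ Sum.inr)) ᵥ* D ⬝ᵥ
          ((D⁻¹ * Bᴴ) *ᵥ (z ∘ Sum.inl) + (z ∘ Sum.inr)) := by
        rw [← dotProduct_mulVec]
        exact hD.posSemidef.dotProduct_mulVec_nonneg _
      have h2 : 0 < star (z ∘ Sum.inl) ᵥ* (A - B * D⁻¹ * Bᴴ) ⬝ᵥ (z ∘ Sum.inl) := by
        rw [← dotProduct_mulVec]
        exact hS.dotProduct_mulVec_pos hx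
      linarith
  have hB₁ : ∀ hM : (fromBlocks A B Bᴴ D).PosDef, (D - Bᴴ * A⁻¹ * B).PosDef := by
    intro hM
    refine posDef_iff_dotProduct_mulVec.mpr ⟨(Matrix.IsHermitian.fromBlocks₁₁ B D hA.1).mp hM.1, fun y hy => ?_⟩
    have := hM.dotProduct_mulVec_pos (x := Sum.elim (-((A⁻¹ * B) *ᵥ y)) y) (by
      intro h
      apply hy
      have := congrFun h
      funext i
      simpa using this (Sum.inr i))
    rw [dotProduct_mulVec, Matrix.schur_complement_eq₁₁ B D _ y hA.1] at this
    simp only [neg_add_cancel] at this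
    rw [dotProduct_mulVec]
    simpa using this
  have hB₂ : ∀ hM : (fromBlocks A B Bᴴ D).PosDef, (A - B * D⁻¹ * Bᴴ).PosDef := by
    intro hM
    refine posDef_iff_dotProduct_mulVec.mpr ⟨(Matrix.IsHermitian.fromBlocks₂₂ A B hD.1).mp hM.1, fun x hx => ?_⟩
    have := hM.dotProduct_mulVec_pos (x := Sum.elim x (-((D⁻¹ * Bᴴ) *ᵥ x))) (by
      intro h
      apply hx
      have := congrFun h
      funext i
      simpa using this (Sum.inl i))
    rw [dotProduct_mulVec, Matrix.schur_complement_eq₂₂ A B x _ hD.1] at this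
    simp only [add_neg_cancel] at this
    rw [dotProduct_mulVec]
    simpa using this
  exact ⟨fun h => hB₂ (hM₁ _ rfl h), fun h => hB₁ (hM₂ _ rfl h)⟩

theorem stmt1 {n k l : ℕ} (b : Matrix (Fin n) (Fin k) ℝ) (σ : Matrix (Fin l) (Fin k) ℝ)
    (hc : (b * bᵀ).PosDef) (hσ : (σ * σᵀ).PosDef) :
    (σ * (1 - bᵀ * (b * bᵀ)⁻¹ * b) * σᵀ).PosDef ↔
      (b * bᵀ - b * σᵀ * (σ * σᵀ)⁻¹ * σ * bᵀ).PosDef := by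
  have hBH : (σ * bᵀ)ᴴ = b * σᵀ := by
    rw [conjTranspose_mul]
    simp
  have key := schur_posDef_fromBlocks (A := σ * σᵀ) (B := σ * bᵀ) (D := b * bᵀ) hσ hc
  rw [hBH] at key
  have hL : σ * (1 - bᵀ * (b * bᵀ)⁻¹ * b) * σᵀ
      = σ * σᵀ - σ * bᵀ * (b * bᵀ)⁻¹ * (b * σᵀ) := by
    simp only [Matrix.mul_sub, Matrix.sub_mul, Matrix.mul_one, Matrix.mul_assoc]
  have hR : b * bᵀ - b * σᵀ * (σ * σᵀ)⁻¹ * σ * bᵀ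
      = b * bᵀ - b * σᵀ * (σ * σᵀ)⁻¹ * (σ * bᵀ) := by
    rw [Matrix.mul_assoc (b * σᵀ * (σ * σᵀ)⁻¹)]
  rw [hL, hR]
  exact key.symm
end

section
/- Let b be an n×k real matrix and σ an l×k real matrix with c = b bᵀ and σσᵀ positive definite, and let Q₁ = I_k − bᵀ c⁻¹ b. If σ Q₁ σᵀ is positive definite, then the n + l rows of b and σ taken together are linearly independent as vectors in ℝᵏ; in particular k ≥ n + l. -/
open Matrix

theorem stmt2 {n k l : ℕ} (b : Matrix (Fin n) (Fin k) ℝ) (σ : Matrix (Fin l) (Fin k) ℝ)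
    (hc : (b * bᵀ).PosDef) (hσ : (σ * σᵀ).PosDef)
    (hQ : (σ * (1 - bᵀ * (b * bᵀ)⁻¹ * b) * σᵀ).PosDef) :
    LinearIndependent ℝ (Sum.elim (fun i : Fin n => b i) (fun j : Fin l => σ j)) ∧
      n + l ≤ k := by
  have hcdet : IsUnit (b * bᵀ).det := isUnit_iff_ne_zero.2 hc.det_pos.ne'
  have hinv : (b * bᵀ)⁻¹ * (b * bᵀ) = 1 := nonsing_inv_mul _ hcdet
  have hQb : (1 - bᵀ * (b * bᵀ)⁻¹ * b) * bᵀ = 0 := by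
    rw [Matrix.sub_mul, Matrix.one_mul, Matrix.mul_assoc, Matrix.mul_assoc, hinv, Matrix.mul_one, sub_self]
  have hli : LinearIndependent ℝ (Sum.elim (fun i : Fin n => b i) (fun j : Fin l => σ j)) := by
    rw [Fintype.linearIndependent_iff]
    intro g hg
    set x : Fin n → ℝ := fun i => g (Sum.inl i) with hxdef
    set y : Fin l → ℝ := fun j => g (Sum.inr j) with hydef
    have hsum : bᵀ *ᵥ x + σᵀ *ᵥ y = 0 := by
      funext j
      have h := congrFun hg j
      simp only [Finset.sum_apply, Fintype.sum_sum_type, Sum.elim_inl, Sum.elim_inr,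
        Pi.smul_apply, smul_eq_mul, Pi.zero_apply] at h
      simp only [Pi.add_apply, Pi.zero_apply, mulVec, dotProduct, transpose_apply]
      rw [← h]
      ring_nf
      congr 1 <;> exact Finset.sum_congr rfl fun i _ => mul_comm _ _
    have hQu : (1 - bᵀ * (b * bᵀ)⁻¹ * b) *ᵥ (bᵀ *ᵥ x) = 0 := by
      rw [mulVec_mulVec, hQb, zero_mulVec]
    have hsv : σᵀ *ᵥ y = -(bᵀ *ᵥ x) := eq_neg_of_add_eq_zero_right hsum
    have hy : y = 0 := by
      by_contra hy0
      have hpos := hQ.dotProduct_mulVec_pos hy0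
      have hz : (σ * (1 - bᵀ * (b * bᵀ)⁻¹ * b) * σᵀ) *ᵥ y = 0 := by
        rw [← mulVec_mulVec, ← mulVec_mulVec, hsv, mulVec_neg, hQu, neg_zero, mulVec_zero]
      rw [hz, dotProduct_zero] at hpos
      exact lt_irrefl 0 hpos
    have hbx : bᵀ *ᵥ x = 0 := by
      have : σᵀ *ᵥ y = 0 := by rw [hy, mulVec_zero]
      simpa [this] using hsum
    have hx : x = 0 := by
      by_contra hx0
      have hpos := hc.dotProduct_mulVec_pos hx0
      rw [← mulVec_mulVec, hbx, mulVec_zero, dotProduct_zero] at hpos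
      exact lt_irrefl 0 hpos
    rintro (i | j)
    · exact congrFun hx i
    · exact congrFun hy j
  refine ⟨hli, ?_⟩
  have := hli.fintype_card_le_finrank
  simpa using this
end

section
/- Let b be an n×k real matrix and σ an l×k real matrix with c = b bᵀ and σ Q₁ σᵀ positive definite, where Q₁ = I_k − bᵀ c⁻¹ b, and let Q₂ = Q₁ (I_k − σᵀ (σ Q₁ σᵀ)⁻¹ σ) Q₁. If β ∈ ℝᵏ satisfies βᵀ Q₂ β > 0, then β does not belong to the sum of the ranges of bᵀ and σᵀ, i.e., β cannot be written as bᵀ z + σᵀ y for any z ∈ ℝⁿ, y ∈ ℝˡ. -/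
open Matrix

theorem stmt3 {n k l : ℕ} (b : Matrix (Fin n) (Fin k) ℝ) (σ : Matrix (Fin l) (Fin k) ℝ)
    (hc : IsUnit (b * bᵀ))
    (Q₁ Q₂ : Matrix (Fin k) (Fin k) ℝ)
    (hQ₁ : Q₁ = 1 - bᵀ * (b * bᵀ)⁻¹ * b)
    (hpos : (σ * Q₁ * σᵀ).PosDef)
    (hQ₂ : Q₂ = Q₁ * (1 - σᵀ * (σ * Q₁ * σᵀ)⁻¹ * σ) * Q₁)
    (β : Fin k → ℝ) (hβ : 0 < β ⬝ᵥ (Q₂ *ᵥ β)) :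
    ∀ (z : Fin n → ℝ) (y : Fin l → ℝ), β ≠ bᵀ *ᵥ z + σᵀ *ᵥ y := by
  intro z y h
  have hcdet : IsUnit (b * bᵀ).det := (Matrix.isUnit_iff_isUnit_det _).mp hc
  have hinv : (b * bᵀ)⁻¹ * (b * bᵀ) = 1 := Matrix.nonsing_inv_mul _ hcdet
  have hQ1b : Q₁ * bᵀ = 0 := by
    rw [hQ₁, Matrix.sub_mul, Matrix.one_mul,
      Matrix.mul_assoc (bᵀ * (b * bᵀ)⁻¹) b bᵀ, Matrix.mul_assoc bᵀ (b * bᵀ)⁻¹ (b * bᵀ),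
      hinv, Matrix.mul_one, sub_self]
  have hQ1idem : Q₁ * Q₁ = Q₁ := by
    nth_rewrite 2 [hQ₁]
    rw [Matrix.mul_sub, Matrix.mul_one, ← Matrix.mul_assoc Q₁ (bᵀ * (b * bᵀ)⁻¹) b,
      ← Matrix.mul_assoc Q₁ bᵀ (b * bᵀ)⁻¹, hQ1b, Matrix.zero_mul, Matrix.zero_mul, sub_zero]
  have hSdet : IsUnit (σ * Q₁ * σᵀ).det := isUnit_iff_ne_zero.mpr hpos.det_pos.ne'
  have hSinv : (σ * Q₁ * σᵀ)⁻¹ * (σ * Q₁ * σᵀ) = 1 := Matrix.nonsing_inv_mul _ hSdet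
  have hQ2b : Q₂ * bᵀ = 0 := by
    rw [hQ₂, Matrix.mul_assoc, hQ1b, Matrix.mul_zero]
  have hQ2s : Q₂ * σᵀ = 0 := by
    have this1 : σᵀ * (σ * Q₁ * σᵀ)⁻¹ * σ * (Q₁ * σᵀ) = σᵀ := by
      rw [Matrix.mul_assoc (σᵀ * (σ * Q₁ * σᵀ)⁻¹) σ (Q₁ * σᵀ), ← Matrix.mul_assoc σ Q₁ σᵀ,
        Matrix.mul_assoc σᵀ (σ * Q₁ * σᵀ)⁻¹ (σ * Q₁ * σᵀ), hSinv, Matrix.mul_one]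
    have key : (1 - σᵀ * (σ * Q₁ * σᵀ)⁻¹ * σ) * (Q₁ * σᵀ) = Q₁ * σᵀ - σᵀ := by
      rw [Matrix.sub_mul, Matrix.one_mul, this1]
    rw [hQ₂, Matrix.mul_assoc (Q₁ * (1 - σᵀ * (σ * Q₁ * σᵀ)⁻¹ * σ)) Q₁ σᵀ,
      Matrix.mul_assoc Q₁ (1 - σᵀ * (σ * Q₁ * σᵀ)⁻¹ * σ) (Q₁ * σᵀ), key,
      Matrix.mul_sub, ← Matrix.mul_assoc Q₁ Q₁ σᵀ, hQ1idem, sub_self]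
  have hzero : Q₂ *ᵥ β = 0 := by
    rw [h, Matrix.mulVec_add, Matrix.mulVec_mulVec, Matrix.mulVec_mulVec, hQ2b, hQ2s]
    simp
  rw [hzero] at hβ
  simp at hβ
end

section
/- Let b be an n×k real matrix with c = b bᵀ invertible, σ an l×k matrix with σ Q₁ σᵀ positive definite where Q₁ = I_k − bᵀ c⁻¹ b, and Q₂ = Q₁ (I_k − σᵀ (σ Q₁ σᵀ)⁻¹ σ) Q₁. Then Q₂ is symmetric positive semidefinite, and for β ∈ ℝᵏ one has βᵀ Q₂ β > 0 if and only if Q₁ β does not belong to the range of Q₁ σᵀ. -/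
open Matrix

theorem stmt4 {n k l : ℕ} (b : Matrix (Fin n) (Fin k) ℝ) (σ : Matrix (Fin l) (Fin k) ℝ)
    (hc : IsUnit (b * bᵀ))
    (Q₁ Q₂ : Matrix (Fin k) (Fin k) ℝ)
    (hQ₁ : Q₁ = 1 - bᵀ * (b * bᵀ)⁻¹ * b)
    (hpos : (σ * Q₁ * σᵀ).PosDef)
    (hQ₂ : Q₂ = Q₁ * (1 - σᵀ * (σ * Q₁ * σᵀ)⁻¹ * σ) * Q₁) :
    Q₂ᵀ = Q₂ ∧ Q₂.PosSemidef ∧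
      ∀ β : Fin k → ℝ,
        (0 < β ⬝ᵥ (Q₂ *ᵥ β) ↔ ¬ ∃ y : Fin l → ℝ, Q₁ *ᵥ β = (Q₁ * σᵀ) *ᵥ y) := by
  set c := b * bᵀ with hcdef
  set A := σ * Q₁ * σᵀ with hAdef
  have hcinv : c⁻¹ * c = 1 := Matrix.nonsing_inv_mul c ((Matrix.isUnit_iff_isUnit_det c).mp hc)
  have hT : Q₁ᵀ = Q₁ := by
    have hcT : cᵀ = c := by simp [hcdef, Matrix.transpose_mul]
    rw [hQ₁]
    simp [Matrix.transpose_mul, Matrix.transpose_nonsing_inv, hcT, Matrix.mul_assoc]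
  have h1 : Q₁ * Q₁ = Q₁ := by
    rw [hQ₁]
    simp only [Matrix.sub_mul, Matrix.mul_sub, Matrix.one_mul, Matrix.mul_one]
    have : bᵀ * c⁻¹ * b * (bᵀ * c⁻¹ * b) = bᵀ * c⁻¹ * b := by
      calc bᵀ * c⁻¹ * b * (bᵀ * c⁻¹ * b) = bᵀ * ((c⁻¹ * c) * (c⁻¹ * b)) := by
            simp only [hcdef, Matrix.mul_assoc]
        _ = bᵀ * c⁻¹ * b := by rw [hcinv, Matrix.one_mul, Matrix.mul_assoc]
    rw [this]
    abel
  have hAunit : IsUnit A.det := (Matrix.isUnit_iff_isUnit_det A).mp hpos.isUnit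
  have hAinv : A⁻¹ * A = 1 := Matrix.nonsing_inv_mul A hAunit
  have hAsym : Aᵀ = A := by
    rw [hAdef]; simp [Matrix.transpose_mul, hT, Matrix.mul_assoc]
  have hAinvsym : (A⁻¹)ᵀ = A⁻¹ := by rw [Matrix.transpose_nonsing_inv, hAsym]
  have hA' : σ * (Q₁ * σᵀ) = A := by rw [hAdef, Matrix.mul_assoc]
  -- expanded form of Q₂
  have hQ₂' : Q₂ = Q₁ - Q₁ * (σᵀ * (A⁻¹ * (σ * Q₁))) := by
    rw [hQ₂, Matrix.mul_sub, Matrix.mul_one, Matrix.sub_mul, h1]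
    simp only [Matrix.mul_assoc]
  have hQ₂Q₁ : Q₂ * Q₁ = Q₂ := by
    conv_lhs => rw [hQ₂', Matrix.sub_mul]
    simp only [Matrix.mul_assoc]
    rw [h1, hQ₂']
  have hQ₁Q₂ : Q₁ * Q₂ = Q₂ := by
    rw [hQ₂', Matrix.mul_sub, ← Matrix.mul_assoc, ← Matrix.mul_assoc, h1]
    rw [Matrix.mul_assoc]
  have hkey : Q₂ * (Q₁ * σᵀ) = 0 := by
    rw [hQ₂', Matrix.sub_mul]
    simp only [Matrix.mul_assoc]
    rw [show Q₁ * (Q₁ * σᵀ) = Q₁ * σᵀ by rw [← Matrix.mul_assoc, h1]]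
    rw [hA', hAinv, Matrix.mul_one, sub_self]
  have hQ₂σ : Q₂ * σᵀ = 0 := by
    have h := hkey
    rw [← Matrix.mul_assoc, hQ₂Q₁] at h
    exact h
  have hQ₂T : Q₂ᵀ = Q₂ := by
    rw [hQ₂']
    simp only [Matrix.transpose_sub, Matrix.transpose_mul, Matrix.transpose_transpose, hT,
      hAinvsym]
    simp only [Matrix.mul_assoc]
  have hidem : Q₂ * Q₂ = Q₂ := by
    nth_rewrite 2 [hQ₂']
    rw [Matrix.mul_sub, hQ₂Q₁, ← Matrix.mul_assoc, hQ₂Q₁, ← Matrix.mul_assoc, hQ₂σ,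
      Matrix.zero_mul, sub_zero]
  have hfact : Q₂ᵀ * Q₂ = Q₂ := by rw [hQ₂T, hidem]
  refine ⟨hQ₂T, ?_, ?_⟩
  · have := Matrix.posSemidef_conjTranspose_mul_self Q₂
    rwa [show Q₂ᴴ = Q₂ᵀ from rfl, hfact] at this
  · intro β
    have hdot : β ⬝ᵥ (Q₂ *ᵥ β) = (Q₂ *ᵥ β) ⬝ᵥ (Q₂ *ᵥ β) := by
      conv_lhs => rw [← hfact]
      rw [← Matrix.mulVec_mulVec, Matrix.dotProduct_mulVec, ← hQ₂T, Matrix.vecMul_transpose, hQ₂T]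
    rw [hdot]
    constructor
    · rintro hpos' ⟨y, hy⟩
      have hz : Q₂ *ᵥ β = 0 := by
        calc Q₂ *ᵥ β = (Q₂ * Q₁) *ᵥ β := by rw [hQ₂Q₁]
          _ = Q₂ *ᵥ (Q₁ *ᵥ β) := by rw [← Matrix.mulVec_mulVec]
          _ = Q₂ *ᵥ ((Q₁ * σᵀ) *ᵥ y) := by rw [hy]
          _ = (Q₂ * (Q₁ * σᵀ)) *ᵥ y := by rw [Matrix.mulVec_mulVec]
          _ = 0 := by rw [hkey, Matrix.zero_mulVec]
      rw [hz] at hpos'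
      simp at hpos'
    · intro hne
      have hnn : (0:ℝ) ≤ (Q₂ *ᵥ β) ⬝ᵥ (Q₂ *ᵥ β) :=
        Finset.sum_nonneg fun i _ => mul_self_nonneg _
      rcases lt_or_eq_of_le hnn with h | h
      · exact h
      · exfalso
        apply hne
        have hz : Q₂ *ᵥ β = 0 := dotProduct_self_eq_zero.mp h.symm
        refine ⟨(A⁻¹ * σ * Q₁) *ᵥ β, ?_⟩
        have hexp : Q₂ *ᵥ β = Q₁ *ᵥ β - (Q₁ * σᵀ) *ᵥ ((A⁻¹ * σ * Q₁) *ᵥ β) := by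
          rw [hQ₂', Matrix.sub_mulVec, Matrix.mulVec_mulVec]
          simp only [Matrix.mul_assoc]
        rw [hz] at hexp
        exact sub_eq_zero.mp hexp.symm
end

section
/- With M(u) = uᵀ(a − r·𝟙) − ½ uᵀ c u + r − α + ½|β|², N(u) = bᵀ u − β, c = b bᵀ positive definite, and λ = 1: the supremum over u ∈ ℝⁿ of M(u) + ½|N(u)|² + pᵀ σ N(u) is finite if and only if a − r·𝟙 − bβ + b σᵀ p = 0, and in that case the expression is independent of u and equals r − α + |β|² − pᵀ σ β. -/
open Matrix

theorem stmt8 {n k l : ℕ} (a : Fin n → ℝ) (r α : ℝ)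
    (b : Matrix (Fin n) (Fin k) ℝ) (β : Fin k → ℝ) (σ : Matrix (Fin l) (Fin k) ℝ)
    (p : Fin l → ℝ) (hc : (b * bᵀ).PosDef)
    (Φ : (Fin n → ℝ) → ℝ)
    (hΦ : Φ = fun u => u ⬝ᵥ (a - r • 1) - (1/2) * (u ⬝ᵥ ((b * bᵀ) *ᵥ u)) + r - α
      + (1/2) * (β ⬝ᵥ β) + (1/2) * ((bᵀ *ᵥ u - β) ⬝ᵥ (bᵀ *ᵥ u - β))
      + p ⬝ᵥ (σ *ᵥ (bᵀ *ᵥ u - β))) :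
    (BddAbove (Set.range Φ) ↔ a - r • 1 - b *ᵥ β + b *ᵥ (σᵀ *ᵥ p) = 0) ∧
      (a - r • 1 - b *ᵥ β + b *ᵥ (σᵀ *ᵥ p) = 0 →
        ∀ u : Fin n → ℝ, Φ u = r - α + β ⬝ᵥ β - p ⬝ᵥ (σ *ᵥ β)) := by
  set v : Fin n → ℝ := a - r • 1 - b *ᵥ β + b *ᵥ (σᵀ *ᵥ p) with hv
  set C : ℝ := r - α + β ⬝ᵥ β - p ⬝ᵥ (σ *ᵥ β) with hC
  have key : ∀ u, Φ u = u ⬝ᵥ v + C := by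
    intro u
    have h1 : (bᵀ *ᵥ u) ⬝ᵥ (bᵀ *ᵥ u) = u ⬝ᵥ ((b * bᵀ) *ᵥ u) := by
      rw [Matrix.dotProduct_mulVec, Matrix.vecMul_transpose, ← Matrix.mulVec_mulVec]
      rw [Matrix.dotProduct_mulVec, ← Matrix.mulVec_transpose]
      rw [Matrix.dotProduct_mulVec, Matrix.vecMul_transpose]
    have h2 : (bᵀ *ᵥ u) ⬝ᵥ β = u ⬝ᵥ (b *ᵥ β) := by
      rw [Matrix.mulVec_transpose]
      exact (Matrix.dotProduct_mulVec _ _ _).symm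
    have h3 : p ⬝ᵥ (σ *ᵥ (bᵀ *ᵥ u)) = u ⬝ᵥ (b *ᵥ (σᵀ *ᵥ p)) := by
      rw [Matrix.dotProduct_mulVec p σ, dotProduct_comm, Matrix.mulVec_transpose b,
        ← Matrix.mulVec_transpose σ]
      exact (Matrix.dotProduct_mulVec _ _ _).symm
    simp only [hΦ, hv, hC]
    simp only [Matrix.mulVec_add, Matrix.mulVec_sub, dotProduct_add,
      dotProduct_sub, sub_dotProduct, add_dotProduct]
    rw [h1, h2] at *
    ring_nf
    rw [h3] at *
    ring_nf
    rw [dotProduct_comm β, Matrix.mulVec_transpose,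
      dotProduct_comm β (u ᵥ* b), ← Matrix.dotProduct_mulVec]
    ring
  constructor
  · constructor
    · intro hb
      by_contra hne
      have hnn : (0:ℝ) ≤ v ⬝ᵥ v := Finset.sum_nonneg fun i _ => mul_self_nonneg _
      have hvv : (0:ℝ) < v ⬝ᵥ v := by
        rcases lt_or_eq_of_le hnn with h | h
        · exact h
        · exact absurd (dotProduct_self_eq_zero.mp h.symm) hne
      obtain ⟨M, hM⟩ := hb
      have : ∀ t : ℝ, t * (v ⬝ᵥ v) + C ≤ M := by
        intro t
        have := hM (Set.mem_range_self (t • v))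
        rwa [key, smul_dotProduct, smul_eq_mul] at this
      have h2 := this ((M - C + 1) / (v ⬝ᵥ v))
      rw [div_mul_cancel₀ _ (ne_of_gt hvv)] at h2
      linarith
    · intro h
      refine ⟨C, ?_⟩
      rintro x ⟨u, rfl⟩
      rw [key, h, dotProduct_zero, zero_add]
  · intro h u
    rw [key, h, dotProduct_zero, zero_add]
end
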